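/- arXiv:1508.06162 — 2 statements merged into one kernel-verified Lean document; each statement's English description precedes it below -/
import Mathlib

section
/- Let (ρ₁,u₁,ρ₅,u₅,ρ₆,u₆) be a germ solution of the call-center system (so ρ₁, ρ₅, ρ₆ ≥ 0), and define z₁(t) = u₁ + ρ₁·t, z₅(t) = u₅ + ρ₅·t, z₆(t) = u₆ + ρ₆·t for t ∈ ℝ. Then z₁, z₅, z₆ satisfy the δ-discretized call-center equations for all sufficiently large t ∈ δℕ. -/
/-!
Affine functions `t ↦ a t + b` are compared, for large `t`, by the lexicographic order of
their coefficient pairs `(a, b)`; hence the affine function of a lexicographic minimum of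
coefficient pairs eventually coincides with the pointwise minimum of the two affine functions.
Substituting the affine functions of a germ solution into the discretized equations, each
minimum becomes such a minimum of affine functions, and equation (a) of the germ holds
identically. The only exception is the extremely-urgent equation when `ρ₆ > 0`: there the
germ prescribes the second argument of the minimum, and the first one exceeds it by the
level-2 capacity slack plus `ρ₆ δ`, both nonnegative.
-/

/-- Lexicographic order on `ℝ × ℝ`. -/
def lexLe (p q : ℝ × ℝ) : Prop := p.1 < q.1 ∨ (p.1 = q.1 ∧ p.2 ≤ q.2)

/-- Strict lexicographic order on `ℝ × ℝ`. -/
def lexLt (p q : ℝ × ℝ) : Prop := lexLe p q ∧ p ≠ q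

/-- Lexicographic minimum on `ℝ × ℝ`. -/
noncomputable def lexMin (p q : ℝ × ℝ) : ℝ × ℝ :=
  if p.1 < q.1 ∨ (p.1 = q.1 ∧ p.2 ≤ q.2) then p else q

/-- Parameters of the emergency call center: routing proportions `pe, pu, pa`
(for extremely urgent, urgent, and advice calls), holding times
`te, tu, ta, ttr, te', tu'`, and staffing levels `N1, N2`. -/
structure CCParams where
  pe : ℝ
  pu : ℝ
  pa : ℝ
  te : ℝ
  tu : ℝ
  ta : ℝ
  ttr : ℝ
  te' : ℝ
  tu' : ℝ
  N1 : ℝ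
  N2 : ℝ
  hpe : 0 < pe
  hpu : 0 < pu
  hpa : 0 < pa
  hsum : pe + pu + pa = 1
  hte : 0 < te
  htu : 0 < tu
  hta : 0 < ta
  httr : 0 < ttr
  hte' : 0 < te'
  htu' : 0 < tu'
  hN1 : 0 < N1
  hN2 : 0 < N2

/-- Average treatment time at level 1. -/
noncomputable def CCParams.tbar (P : CCParams) : ℝ :=
  P.pe * (P.te + P.ttr) + P.pu * P.tu + P.pa * P.ta

/-- First phase transition point. -/
noncomputable def CCParams.r1 (P : CCParams) : ℝ := P.pe * (P.ttr + P.te') / P.tbar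

/-- Second phase transition point. -/
noncomputable def CCParams.r2 (P : CCParams) : ℝ :=
  (P.pe * (P.ttr + P.te') + P.pu * P.tu') / P.tbar

/-- A germ solution of the call-center system. -/
noncomputable def CCParams.GermSol (P : CCParams) (ρ1 u1 ρ5 u5 ρ6 u6 : ℝ) : Prop :=
  0 ≤ ρ1 ∧ 0 ≤ ρ5 ∧ 0 ≤ ρ6 ∧
  -- (a)
  (ρ1, u1) = (ρ5 + P.pu * ρ1 + P.pa * ρ1,
    P.N1 + (u5 - ρ5 * P.ttr) + P.pu * (u1 - ρ1 * P.tu) + P.pa * (u1 - ρ1 * P.ta)) ∧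
  -- (b), case ρ6 = 0
  (ρ6 = 0 → (ρ5, u5) = lexMin (ρ5, P.N2 + u5 - ρ5 * (P.ttr + P.te'))
      (P.pe * ρ1, P.pe * (u1 - ρ1 * P.te))) ∧
  -- (b), case ρ6 > 0
  (0 < ρ6 → (ρ5, u5) = (P.pe * ρ1, P.pe * (u1 - ρ1 * P.te))) ∧
  -- (c)
  (ρ6, u6) = lexMin (ρ6, P.N2 - ρ5 * (P.ttr + P.te') + u6 - ρ6 * P.tu')
      (P.pu * ρ1, P.pu * (u1 - ρ1 * P.tu))

/-- The δ-discretized call-center equations at time `t`. -/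
noncomputable def CCParams.Eqns (P : CCParams) (z1 z5 z6 : ℝ → ℝ) (δ t : ℝ) : Prop :=
  z1 t = P.N1 + z5 (t - P.ttr) + P.pu * z1 (t - P.tu) + P.pa * z1 (t - P.ta) ∧
  z5 t = min (P.N2 + z5 (t - P.ttr - P.te') + z6 (t - P.tu') - z6 (t - δ))
      (P.pe * z1 (t - P.te)) ∧
  z6 t = min (P.N2 + z5 (t - P.ttr - P.te') + z6 (t - P.tu') - z5 t)
      (P.pu * z1 (t - P.tu))

open Filter

theorem lexLe_of_not_lexLe {p q : ℝ × ℝ} (h : ¬ lexLe p q) : lexLe q p := by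
  unfold lexLe at *
  push Not at h
  rcases lt_or_eq_of_le h.1 with hlt | heq
  · exact Or.inl hlt
  · exact Or.inr ⟨heq, (h.2 heq.symm).le⟩

theorem eventually_affine_le_of_lexLe {p q : ℝ × ℝ} (h : lexLe p q) :
    ∀ᶠ t in atTop, p.2 + p.1 * t ≤ q.2 + q.1 * t := by
  rcases h with hlt | ⟨heq, hle⟩
  · filter_upwards [eventually_ge_atTop ((p.2 - q.2) / (q.1 - p.1))] with t ht
    rw [div_le_iff₀ (sub_pos.mpr hlt)] at ht
    linarith
  · exact Eventually.of_forall fun t => by rw [heq]; linarith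

theorem eventually_lexMin_affine (p q : ℝ × ℝ) :
    ∀ᶠ t in atTop, (lexMin p q).2 + (lexMin p q).1 * t = min (p.2 + p.1 * t) (q.2 + q.1 * t) := by
  by_cases h : lexLe p q
  · have hp : lexMin p q = p := if_pos h
    filter_upwards [eventually_affine_le_of_lexLe h] with t ht
    rw [hp, min_eq_left ht]
  · have hq : lexMin p q = q := if_neg h
    filter_upwards [eventually_affine_le_of_lexLe (lexLe_of_not_lexLe h)] with t ht
    rw [hq, min_eq_right ht]

theorem le_of_eq_lexMin {a b b' : ℝ} {q : ℝ × ℝ} (h : (a, b) = lexMin (a, b') q) : b ≤ b' := by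
  unfold lexMin at h
  split_ifs at h with hle
  · exact (Prod.mk.inj h).2.le
  · subst h
    rcases lexLe_of_not_lexLe hle with hlt | ⟨-, hqb⟩
    · exact absurd hlt (lt_irrefl a)
    · exact hqb

namespace CCParams.GermSol

variable {P : CCParams} {ρ1 u1 ρ5 u5 ρ6 u6 : ℝ} (hsol : P.GermSol ρ1 u1 ρ5 u5 ρ6 u6)
include hsol

theorem capacity_slack_nonneg : 0 ≤ P.N2 - ρ5 * (P.ttr + P.te') - ρ6 * P.tu' := by
  obtain ⟨-, -, -, -, -, -, hc⟩ := hsol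
  linarith [le_of_eq_lexMin hc]

theorem eqn_level1 (t : ℝ) :
    u1 + ρ1 * t = P.N1 + (u5 + ρ5 * (t - P.ttr)) + P.pu * (u1 + ρ1 * (t - P.tu)) +
      P.pa * (u1 + ρ1 * (t - P.ta)) := by
  obtain ⟨-, -, -, ha, -⟩ := hsol
  obtain ⟨hρ, hu⟩ := Prod.mk.inj ha
  linear_combination hu + t * hρ

theorem eventually_eqn_urgent :
    ∀ᶠ t in atTop, u6 + ρ6 * t = min (P.N2 + (u5 + ρ5 * (t - P.ttr - P.te')) +
      (u6 + ρ6 * (t - P.tu')) - (u5 + ρ5 * t)) (P.pu * (u1 + ρ1 * (t - P.tu))) := by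
  obtain ⟨-, -, -, -, -, -, hc⟩ := hsol
  filter_upwards [eventually_lexMin_affine (ρ6, P.N2 - ρ5 * (P.ttr + P.te') + u6 - ρ6 * P.tu')
    (P.pu * ρ1, P.pu * (u1 - ρ1 * P.tu))] with t ht
  rw [← hc] at ht
  dsimp only at ht
  convert ht using 2 <;> ring

theorem eventually_eqn_ext {δ : ℝ} (hδ : 0 ≤ δ) :
    ∀ᶠ t in atTop, u5 + ρ5 * t = min (P.N2 + (u5 + ρ5 * (t - P.ttr - P.te')) +
      (u6 + ρ6 * (t - P.tu')) - (u6 + ρ6 * (t - δ))) (P.pe * (u1 + ρ1 * (t - P.te))) := by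
  have hslack := hsol.capacity_slack_nonneg
  obtain ⟨-, -, hρ6, -, hb_zero, hb_pos, -⟩ := hsol
  rcases hρ6.eq_or_lt with hρ6 | hρ6
  · filter_upwards [eventually_lexMin_affine (ρ5, P.N2 + u5 - ρ5 * (P.ttr + P.te'))
      (P.pe * ρ1, P.pe * (u1 - ρ1 * P.te))] with t ht
    rw [← hb_zero hρ6.symm] at ht
    subst hρ6
    dsimp only at ht
    convert ht using 2 <;> ring
  · obtain ⟨hρ, hu⟩ := Prod.mk.inj (hb_pos hρ6)
    refine Eventually.of_forall fun t => ?_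
    have hz5 : P.pe * (u1 + ρ1 * (t - P.te)) = u5 + ρ5 * t := by
      rw [hρ, hu]
      ring
    rw [hz5, min_eq_right]
    linarith [mul_nonneg hρ6.le hδ]

theorem eventually_eqns {δ : ℝ} (hδ : 0 ≤ δ) :
    ∀ᶠ t in atTop,
      P.Eqns (fun t => u1 + ρ1 * t) (fun t => u5 + ρ5 * t) (fun t => u6 + ρ6 * t) δ t := by
  filter_upwards [hsol.eventually_eqn_ext hδ, hsol.eventually_eqn_urgent] with t h5 h6
  exact ⟨hsol.eqn_level1 t, h5, h6⟩

end CCParams.GermSol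

theorem stationary_solution_of_germ_general (P : CCParams) (δ : ℝ) (hδ : 0 < δ)
    (ρ1 u1 ρ5 u5 ρ6 u6 : ℝ)
    (hsol : P.GermSol ρ1 u1 ρ5 u5 ρ6 u6) :
    ∃ T : ℝ, ∀ k : ℕ, T ≤ k * δ →
      P.Eqns (fun t => u1 + ρ1 * t) (fun t => u5 + ρ5 * t) (fun t => u6 + ρ6 * t)
        δ (k * δ) := by
  obtain ⟨T, hT⟩ := eventually_atTop.mp (hsol.eventually_eqns hδ.le)
  exact ⟨T, fun k hk => hT _ hk⟩

/-- the affine functions associated with a germ solution of the call-center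
system satisfy the δ-discretized call-center equations for all sufficiently large
`t ∈ δℕ`. -/
theorem stationary_solution_of_germ (P : CCParams) (δ : ℝ) (hδ : 0 < δ)
    (hmte : ∃ n : ℕ, 0 < n ∧ P.te = n * δ)
    (hmtu : ∃ n : ℕ, 0 < n ∧ P.tu = n * δ)
    (hmta : ∃ n : ℕ, 0 < n ∧ P.ta = n * δ)
    (hmttr : ∃ n : ℕ, 0 < n ∧ P.ttr = n * δ)
    (hmte' : ∃ n : ℕ, 0 < n ∧ P.te' = n * δ)
    (hmtu' : ∃ n : ℕ, 0 < n ∧ P.tu' = n * δ)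
    (ρ1 u1 ρ5 u5 ρ6 u6 : ℝ)
    (hsol : P.GermSol ρ1 u1 ρ5 u5 ρ6 u6) :
    ∃ T : ℝ, ∀ k : ℕ, T ≤ k * δ →
      P.Eqns (fun t => u1 + ρ1 * t) (fun t => u5 + ρ5 * t) (fun t => u6 + ρ6 * t)
        δ (k * δ) :=
  stationary_solution_of_germ_general P δ hδ ρ1 u1 ρ5 u5 ρ6 u6 hsol
end

section
/- Let (ρ₁,u₁,ρ₅,u₅,ρ₆,u₆) be a germ solution of the call-center system with ρ₆ > 0, and suppose the lexicographic minimum in equation (c) is attained by its first argument, i.e. (ρ₆, N₂ − ρ₅·(τ_tr + τ_ext') + u₆ − ρ₆·τ_ur') ≤lex (π_ur·ρ₁, π_ur·(u₁ − ρ₁·τ_ur)). Then ρ₆ = (N₂ − N₁·r₁)/τ_ur' and r₁ < N₂/N₁ ≤ r₂. -/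
theorem lexMin_eq_left_of_lexLe {p q : ℝ × ℝ} (h : lexLe p q) : lexMin p q = p :=
  if_pos h

theorem lexLe.fst_le {p q : ℝ × ℝ} (h : lexLe p q) : p.1 ≤ q.1 :=
  h.elim le_of_lt fun h => h.1.le

namespace CCParams

theorem tbar_pos (P : CCParams) : 0 < P.tbar := by
  have := P.hpe; have := P.hpu; have := P.hpa
  have := P.hte; have := P.htu; have := P.hta; have := P.httr
  unfold tbar
  positivity

theorem r1_mul_tbar (P : CCParams) : P.r1 * P.tbar = P.pe * (P.ttr + P.te') :=
  div_mul_cancel₀ _ P.tbar_pos.ne'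

theorem r2_mul_tbar (P : CCParams) :
    P.r2 * P.tbar = P.pe * (P.ttr + P.te') + P.pu * P.tu' :=
  div_mul_cancel₀ _ P.tbar_pos.ne'

namespace GermSol

variable {P : CCParams} {ρ1 u1 ρ5 u5 ρ6 u6 : ℝ}

theorem rho5_eq (hsol : P.GermSol ρ1 u1 ρ5 u5 ρ6 u6) (hρ6 : 0 < ρ6) : ρ5 = P.pe * ρ1 := by
  obtain ⟨-, -, -, -, -, hb, -⟩ := hsol
  exact (Prod.mk_inj.1 (hb hρ6)).1

theorem rho1_mul_tbar (hsol : P.GermSol ρ1 u1 ρ5 u5 ρ6 u6) (hρ6 : 0 < ρ6) :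
    ρ1 * P.tbar = P.N1 := by
  obtain ⟨-, -, -, ha, -, hb, -⟩ := hsol
  obtain ⟨hρ5, hu5⟩ := Prod.mk_inj.1 (hb hρ6)
  have hu1 := (Prod.mk_inj.1 ha).2
  unfold tbar
  linear_combination hu1 + hu5 + u1 * P.hsum - P.ttr * hρ5

theorem rho6_mul_tu' (hsol : P.GermSol ρ1 u1 ρ5 u5 ρ6 u6)
    (hmin : lexLe (ρ6, P.N2 - ρ5 * (P.ttr + P.te') + u6 - ρ6 * P.tu')
      (P.pu * ρ1, P.pu * (u1 - ρ1 * P.tu))) :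
    ρ6 * P.tu' = P.N2 - ρ5 * (P.ttr + P.te') := by
  obtain ⟨-, -, -, -, -, -, hc⟩ := hsol
  rw [lexMin_eq_left_of_lexLe hmin] at hc
  linarith [(Prod.mk_inj.1 hc).2]

end GermSol

end CCParams

/-- in a germ solution with `ρ₆ > 0` in which the lexicographic minimum in
equation (c) is attained by its first argument, we have `ρ₆ = (N₂ − N₁·r₁)/τ_ur'` and
`r₁ < N₂/N₁ ≤ r₂`. -/
theorem germ_phase_mid (P : CCParams) (ρ1 u1 ρ5 u5 ρ6 u6 : ℝ)
    (hsol : P.GermSol ρ1 u1 ρ5 u5 ρ6 u6) (hρ6 : 0 < ρ6)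
    (hmin : lexLe (ρ6, P.N2 - ρ5 * (P.ttr + P.te') + u6 - ρ6 * P.tu')
      (P.pu * ρ1, P.pu * (u1 - ρ1 * P.tu))) :
    ρ6 = (P.N2 - P.N1 * P.r1) / P.tu' ∧
    P.r1 < P.N2 / P.N1 ∧ P.N2 / P.N1 ≤ P.r2 := by
  have hN1 := hsol.rho1_mul_tbar hρ6
  have hρ5 := hsol.rho5_eq hρ6
  have hρ6tu' := hsol.rho6_mul_tu' hmin
  have hN1r1 : P.N1 * P.r1 = ρ5 * (P.ttr + P.te') := by
    rw [← hN1, hρ5]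
    linear_combination ρ1 * P.r1_mul_tbar
  have hN1r2 : P.N1 * P.r2 = ρ5 * (P.ttr + P.te') + P.pu * ρ1 * P.tu' := by
    rw [← hN1, hρ5]
    linear_combination ρ1 * P.r2_mul_tbar
  have hρ6_le : ρ6 * P.tu' ≤ P.pu * ρ1 * P.tu' :=
    mul_le_mul_of_nonneg_right hmin.fst_le P.htu'.le
  refine ⟨?_, ?_, ?_⟩
  · rw [eq_div_iff P.htu'.ne']
    linarith
  · rw [lt_div_iff₀ P.hN1]
    linarith [mul_pos hρ6 P.htu']
  · rw [div_le_iff₀ P.hN1]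
    linarith
end
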